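/- arXiv:1801.09665 — 4 statements merged into one kernel-verified Lean document; each statement's English description precedes it below -/
import Mathlib

section
/- Let n, k, d be positive integers with k ≤ d ≤ n-1, set r = n-k and s = d+1-k. Let λ_{1,0},...,λ_{1,s-1}, λ_2,...,λ_n be n+s-1 distinct elements of a field F and suppose c_{i,u} ∈ F satisfy λ_{1,u}^t c_{1,u} + Σ_{i=2}^n λ_i^t c_{i,u} = 0 for all u ∈ {0,...,s-1} and t ∈ {0,...,r-1}. Let μ_i = Σ_{u=0}^{s-1} c_{i,u} for i ∈ [n]. Then for any subset R ⊆ {2,...,n} with |R| = d, all the values c_{1,0},...,c_{1,s-1}, μ_2,...,μ_n are uniquely determined by {μ_i : i ∈ R}; that is, if two solutions of the parity-check system have the same values of μ_i for all i ∈ R, they have the same values of c_{1,0},...,c_{1,s-1} and all μ_i. -/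
/-!
Subtracting the two solutions and summing the parity checks over `u` gives, for every `t < r`,
a single relation `∑ᵤ λ_{1,u}^t (c_{1,u} - c'_{1,u}) + ∑_{i ∉ R} λ_i^t (μ_i - μ'_i) = 0`, the
terms `i ∈ R` having dropped out. It involves `s + (n - 1 - d) = r` distinct nodes and `r`
powers, so its Vandermonde matrix is invertible and all coefficients vanish.
-/

open Finset

theorem eq_zero_of_forall_sum_pow_mul_eq_zero {R ι : Type*} [CommRing R] [IsDomain R]
    [Fintype ι] {x a : ι → R} (hx : Function.Injective x) {r : ℕ} (hr : Fintype.card ι ≤ r)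
    (h : ∀ t < r, ∑ j, x j ^ t * a j = 0) : a = 0 := by
  let e := Fintype.equivFin ι
  have hva : a ∘ e.symm = 0 := by
    refine Matrix.eq_zero_of_forall_pow_sum_mul_pow_eq_zero (hx.comp e.symm.injective) fun t ↦ ?_
    rw [← h t (t.isLt.trans_le hr), ← e.symm.sum_comp]
    simp only [Function.comp_apply, mul_comm]
  ext j
  simpa using congrFun hva (e j)

theorem sum_parity_check_sub {F : Type*} [Field F] {s r : ℕ} (lam1 : Fin s → F) (lam : ℕ → F)
    (S : Finset ℕ) {c c' : ℕ → Fin s → F}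
    (hpar : ∀ u : Fin s, ∀ t < r, lam1 u ^ t * c 1 u + ∑ i ∈ S, lam i ^ t * c i u = 0)
    (hpar' : ∀ u : Fin s, ∀ t < r, lam1 u ^ t * c' 1 u + ∑ i ∈ S, lam i ^ t * c' i u = 0)
    {t : ℕ} (ht : t < r) :
    ∑ u, lam1 u ^ t * (c 1 u - c' 1 u) + ∑ i ∈ S, lam i ^ t * (∑ u, c i u - ∑ u, c' i u) = 0 := by
  have hu : ∀ u, lam1 u ^ t * (c 1 u - c' 1 u) + ∑ i ∈ S, lam i ^ t * (c i u - c' i u) = 0 := by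
    intro u
    simp only [mul_sub, sum_sub_distrib]
    linear_combination hpar u t ht - hpar' u t ht
  simp only [← sum_sub_distrib, mul_sum]
  rw [sum_comm, ← sum_add_distrib]
  exact sum_eq_zero fun u _ ↦ hu u

theorem stmt6 {F : Type*} [Field F] (n k d : ℕ) (hk : 1 ≤ k) (hkd : k ≤ d) (hdn : d ≤ n - 1)
    (r s : ℕ) (hrdef : r = n - k) (hsdef : s = d + 1 - k)
    (lam1 : Fin s → F) (lam : ℕ → F)
    (h1 : Function.Injective lam1)
    (h2 : Set.InjOn lam ↑(Finset.Icc 2 n))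
    (h3 : ∀ u : Fin s, ∀ i ∈ Finset.Icc 2 n, lam1 u ≠ lam i)
    (c c' : ℕ → Fin s → F)
    (hpar : ∀ u : Fin s, ∀ t < r,
      lam1 u ^ t * c 1 u + ∑ i ∈ Finset.Icc 2 n, lam i ^ t * c i u = 0)
    (hpar' : ∀ u : Fin s, ∀ t < r,
      lam1 u ^ t * c' 1 u + ∑ i ∈ Finset.Icc 2 n, lam i ^ t * c' i u = 0)
    (R : Finset ℕ) (hR : R ⊆ Finset.Icc 2 n) (hRcard : R.card = d)
    (hmuR : ∀ i ∈ R, ∑ u : Fin s, c i u = ∑ u : Fin s, c' i u) :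
    (∀ u : Fin s, c 1 u = c' 1 u) ∧
      ∀ i ∈ Finset.Icc 2 n, ∑ u : Fin s, c i u = ∑ u : Fin s, c' i u := by
  set T := Icc 2 n \ R
  set ν : ℕ → F := fun i ↦ ∑ u, c i u - ∑ u, c' i u
  have hsys : ∀ t < r, ∑ j : Fin s ⊕ T, Sum.elim lam1 (fun i : T ↦ lam i) j ^ t *
      Sum.elim (fun u ↦ c 1 u - c' 1 u) (fun i : T ↦ ν i) j = 0 := by
    intro t ht
    have hT : ∑ i ∈ T, lam i ^ t * ν i = ∑ i ∈ Icc 2 n, lam i ^ t * ν i :=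
      sum_subset sdiff_subset fun i hi hiT ↦ by
        rw [show ν i = 0 from sub_eq_zero.mpr (hmuR i (by simpa [T, hi] using hiT)), mul_zero]
    simp only [Fintype.sum_sum_type, Sum.elim_inl, Sum.elim_inr]
    rw [sum_coe_sort T (fun i ↦ lam i ^ t * ν i), hT]
    exact sum_parity_check_sub lam1 lam _ hpar hpar' ht
  have hinj : Function.Injective (Sum.elim lam1 (fun i : T ↦ lam i)) :=
    h1.sumElim (fun i j hij ↦ Subtype.ext (h2 (sdiff_subset i.2) (sdiff_subset j.2) hij))
      fun u i ↦ h3 u i (sdiff_subset i.2)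
  have hcard : Fintype.card (Fin s ⊕ T) ≤ r := by
    simp only [Fintype.card_sum, Fintype.card_fin, Fintype.card_coe, T, card_sdiff_of_subset hR,
      Nat.card_Icc, hRcard]
    omega
  have hzero := eq_zero_of_forall_sum_pow_mul_eq_zero hinj hcard hsys
  refine ⟨fun u ↦ sub_eq_zero.mp (congrFun hzero (.inl u)), fun i hi ↦ ?_⟩
  by_cases hiR : i ∈ R
  · exact hmuR i hiR
  · exact sub_eq_zero.mp (congrFun hzero (.inr ⟨i, mem_sdiff.mpr ⟨hi, hiR⟩⟩))
end

section
/- Fix real numbers h ≥ 1, d ≥ k ≥ 1, l > 0. Suppose nonnegative reals D_i^R, D_i^F for i in a set of size h satisfy Σ_i D_i^R ≥ h·d·l/(h+d-k) and ((d-k+1)/d)·D_i^R + D_i^F ≥ l for each i. Then Σ_i (D_i^R + D_i^F) ≥ h·(h+d-1)·l/(h+d-k). -/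
theorem stmt7 {ι : Type*} [Fintype ι] (d k l : ℝ)
    (hk : 1 ≤ k) (hkd : k ≤ d) (hl : 0 < l)
    (h : ℝ) (hcard : h = Fintype.card ι) (hh : 1 ≤ h)
    (DR DF : ι → ℝ) (hDR : ∀ i, 0 ≤ DR i) (hDF : ∀ i, 0 ≤ DF i)
    (hsum : ∑ i, DR i ≥ h * d * l / (h + d - k))
    (heach : ∀ i, ((d - k + 1) / d) * DR i + DF i ≥ l) :
    ∑ i, (DR i + DF i) ≥ h * (h + d - 1) * l / (h + d - k) := by
  have hd : (0:ℝ) < d := lt_of_lt_of_le (lt_of_lt_of_le zero_lt_one hk) hkd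
  have hc : (0:ℝ) < h + d - k := by linarith
  set S := ∑ i, DR i with hS
  set F := ∑ i, DF i with hF
  have hsum2 : ∑ i, ((d - k + 1) / d * DR i + DF i) ≥ h * l := by
    calc ∑ i, ((d - k + 1) / d * DR i + DF i) ≥ ∑ _i : ι, l :=
          Finset.sum_le_sum (fun i _ => heach i)
      _ = h * l := by
          rw [Finset.sum_const, Finset.card_univ, nsmul_eq_mul, ← hcard]
  have hsplit : ∑ i, ((d - k + 1) / d * DR i + DF i) = (d - k + 1) / d * S + F := by
    rw [Finset.sum_add_distrib, ← Finset.mul_sum]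
  rw [hsplit] at hsum2
  -- from hsum : S ≥ h*d*l/c, i.e. S*c ≥ h*d*l
  have h1 : h * d * l ≤ S * (h + d - k) := by
    rw [ge_iff_le, div_le_iff₀ hc] at hsum; exact hsum
  have h2 : h * l * d ≤ (d - k + 1) * S + F * d := by
    have h' := mul_le_mul_of_nonneg_right hsum2.le hd.le
    have heq : ((d - k + 1) / d * S + F) * d = (d - k + 1) * S + F * d := by
      field_simp
    rw [heq] at h'
    linarith
  have hSnn : 0 ≤ S := Finset.sum_nonneg (fun i _ => hDR i)
  rw [ge_iff_le, div_le_iff₀ hc]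
  have hgoal : ∑ i, (DR i + DF i) = S + F := Finset.sum_add_distrib
  rw [hgoal]
  nlinarith [mul_nonneg (sub_nonneg.mpr hk) hSnn, h1, h2, hc.le, hd.le]
end

section
/- Define f : [n] × {0,...,3^m - 1} → {0,1} by f(i,a) = (Σ_{j<i} 1{a_{g(j,i)} = 2} + Σ_{j>i} 1{a_{g(i,j)} = 1}) mod 2, where (a_m,...,a_1) is the ternary expansion of a, and g(i_1,i_2) = C(i_2-1,2)+i_1. For fixed i_1 < i_2 in [n], let p = g(i_1,i_2) and for u ∈ {0,1,2} let a(p,u) denote a with its p-th ternary digit replaced by u. Then: (1) for every i ∉ {i_1, i_2}, f(i, a(p,0)) = f(i, a(p,1)) = f(i, a(p,2)); (2) f(i_1, a(p,0)) = f(i_1, a(p,2)) ≠ f(i_1, a(p,1)); (3) f(i_2, a(p,0)) = f(i_2, a(p,1)) ≠ f(i_2, a(p,2)). -/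
/-!
The pairs `1 ≤ j < i` are numbered injectively by `g j i = C(i-1, 2) + j`, since for fixed `i`
these numbers fill the interval `(C(i-1, 2), C(i, 2)]`. Hence the digit at position
`p = g i1 i2` occurs in exactly one of the sums defining the `f i`: in the second sum of `f i1`
(counted when it equals `1`) and in the first sum of `f i2` (counted when it equals `2`).
Changing that digit therefore changes nothing else, and flips the parity exactly as claimed.
-/

open Finset Function

namespace Nat

theorem choose_pred_two_add_lt {j i j' i' : ℕ} (hji : j < i) (hii' : i < i') (hj' : 0 < j') :
    (i - 1).choose 2 + j < (i' - 1).choose 2 + j' :=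
  calc (i - 1).choose 2 + j ≤ (i - 1).choose 2 + (i - 1) := by omega
    _ = i.choose 2 := by
      obtain ⟨k, rfl⟩ : ∃ k, i = k + 1 := ⟨i - 1, by omega⟩
      simp [Nat.choose_succ_succ', add_comm]
    _ ≤ (i' - 1).choose 2 := Nat.choose_le_choose 2 (by omega)
    _ < (i' - 1).choose 2 + j' := by omega

theorem choose_pred_two_add_inj {j i j' i' : ℕ} (hj : 0 < j) (hji : j < i) (hj' : 0 < j')
    (hji' : j' < i') (h : (i - 1).choose 2 + j = (i' - 1).choose 2 + j') : j = j' ∧ i = i' := by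
  rcases lt_trichotomy i i' with hlt | rfl | hgt
  · exact absurd h (choose_pred_two_add_lt hji hlt hj').ne
  · omega
  · exact absurd h (choose_pred_two_add_lt hji' hgt hj).ne'

end Nat

section UpdateSum

variable {ι α β M : Type*} [DecidableEq α] [AddCommMonoid M]
  (F : β → M) (b : α → β) (k : ι → α) {p : α} (u : β)

theorem Finset.sum_comp_update_of_forall_ne {s : Finset ι} (hk : ∀ x ∈ s, k x ≠ p) :
    ∑ x ∈ s, F (update b p u (k x)) = ∑ x ∈ s, F (b (k x)) :=
  sum_congr rfl fun x hx => by rw [update_of_ne (hk x hx)]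

theorem Finset.sum_comp_update_eq_add_sum_erase [DecidableEq ι] {s : Finset ι} {x₀ : ι}
    (hx₀ : x₀ ∈ s) (hkx₀ : k x₀ = p) (hk : ∀ x ∈ s, x ≠ x₀ → k x ≠ p) :
    ∑ x ∈ s, F (update b p u (k x)) = F u + ∑ x ∈ s.erase x₀, F (b (k x)) := by
  rw [← add_sum_erase s _ hx₀, hkx₀, update_self,
    sum_comp_update_of_forall_ne F b k u fun x hx => hk x (mem_of_mem_erase hx) (ne_of_mem_erase hx)]

end UpdateSum

theorem stmt11_general (n : ℕ)
    (a : ℕ → ℕ)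
    (g : ℕ → ℕ → ℕ) (hg : ∀ i1 i2, g i1 i2 = Nat.choose (i2 - 1) 2 + i1)
    (f : ℕ → (ℕ → ℕ) → ℕ)
    (hf : ∀ i b, f i b =
      ((∑ j ∈ Finset.Ico 1 i, if b (g j i) = 2 then 1 else 0) +
       (∑ j ∈ Finset.Ioc i n, if b (g i j) = 1 then 1 else 0)) % 2)
    (i1 i2 : ℕ) (hi1 : 1 ≤ i1) (hi12 : i1 < i2) (hi2 : i2 ≤ n)
    (p : ℕ) (hp : p = g i1 i2) :
    (∀ i ∈ Finset.Icc 1 n, i ≠ i1 → i ≠ i2 →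
        f i (Function.update a p 0) = f i (Function.update a p 1) ∧
        f i (Function.update a p 1) = f i (Function.update a p 2)) ∧
    (f i1 (Function.update a p 0) = f i1 (Function.update a p 2) ∧
      f i1 (Function.update a p 0) ≠ f i1 (Function.update a p 1)) ∧
    (f i2 (Function.update a p 0) = f i2 (Function.update a p 1) ∧
      f i2 (Function.update a p 0) ≠ f i2 (Function.update a p 2)) := by
  subst hp
  have hg_ne : ∀ j i, 1 ≤ j → j < i → (j ≠ i1 ∨ i ≠ i2) → g j i ≠ g i1 i2 := by
    intro j i hj hji hne h
    rw [hg, hg] at h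
    have := Nat.choose_pred_two_add_inj hj hji hi1 hi12 h
    tauto
  refine ⟨fun i hi hi1' hi2' ↦ ?_, ?_, ?_⟩
  · have h : ∀ u, f i (update a (g i1 i2) u) = f i a := fun u ↦ by
      rw [hf, hf, sum_comp_update_of_forall_ne (fun v ↦ if v = 2 then 1 else 0) a (g · i) u
        fun j hj ↦ hg_ne j i (mem_Ico.1 hj).1 (mem_Ico.1 hj).2 (.inr hi2'),
        sum_comp_update_of_forall_ne (fun v ↦ if v = 1 then 1 else 0) a (g i) u
        fun j hj ↦ hg_ne i j (mem_Icc.1 hi).1 (mem_Ioc.1 hj).1 (.inl hi1')]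
    simp only [h, and_self]
  · have h : ∀ u, f i1 (update a (g i1 i2) u) =
        ((∑ j ∈ Ico 1 i1, if a (g j i1) = 2 then 1 else 0) + ((if u = 1 then 1 else 0) +
          ∑ j ∈ (Ioc i1 n).erase i2, if a (g i1 j) = 1 then 1 else 0)) % 2 := fun u ↦ by
      rw [hf, sum_comp_update_of_forall_ne (fun v ↦ if v = 2 then 1 else 0) a (g · i1) u
        fun j hj ↦ hg_ne j i1 (mem_Ico.1 hj).1 (mem_Ico.1 hj).2 (.inr hi12.ne),
        sum_comp_update_eq_add_sum_erase (fun v ↦ if v = 1 then 1 else 0) a (g i1) u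
          (mem_Ioc.2 ⟨hi12, hi2⟩) rfl fun j hj hj2 ↦ hg_ne i1 j hi1 (mem_Ioc.1 hj).1 (.inr hj2)]
    simp only [h, Nat.reduceEqDiff, if_true, if_false, true_and]
    omega
  · have h : ∀ u, f i2 (update a (g i1 i2) u) =
        (((if u = 2 then 1 else 0) + ∑ j ∈ (Ico 1 i2).erase i1, if a (g j i2) = 2 then 1 else 0) +
          ∑ j ∈ Ioc i2 n, if a (g i2 j) = 1 then 1 else 0) % 2 := fun u ↦ by
      rw [hf, sum_comp_update_eq_add_sum_erase (fun v ↦ if v = 2 then 1 else 0) a (g · i2) u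
          (mem_Ico.2 ⟨hi1, hi12⟩) rfl fun j hj hj1 ↦
            hg_ne j i2 (mem_Ico.1 hj).1 (mem_Ico.1 hj).2 (.inl hj1),
        sum_comp_update_of_forall_ne (fun v ↦ if v = 1 then 1 else 0) a (g i2) u
          fun j hj ↦ hg_ne i2 j (by omega) (mem_Ioc.1 hj).1 (.inl hi12.ne')]
    simp only [h, Nat.reduceEqDiff, if_true, if_false, true_and]
    omega

theorem stmt11 (n : ℕ) (hn : 2 ≤ n) (m : ℕ) (hm : m = Nat.choose n 2)
    (a : ℕ → ℕ) (ha : ∀ j, a j < 3)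
    (g : ℕ → ℕ → ℕ) (hg : ∀ i1 i2, g i1 i2 = Nat.choose (i2 - 1) 2 + i1)
    (f : ℕ → (ℕ → ℕ) → ℕ)
    (hf : ∀ i b, f i b =
      ((∑ j ∈ Finset.Ico 1 i, if b (g j i) = 2 then 1 else 0) +
       (∑ j ∈ Finset.Ioc i n, if b (g i j) = 1 then 1 else 0)) % 2)
    (i1 i2 : ℕ) (hi1 : 1 ≤ i1) (hi12 : i1 < i2) (hi2 : i2 ≤ n)
    (p : ℕ) (hp : p = g i1 i2) :
    (∀ i ∈ Finset.Icc 1 n, i ≠ i1 → i ≠ i2 →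
        f i (Function.update a p 0) = f i (Function.update a p 1) ∧
        f i (Function.update a p 1) = f i (Function.update a p 2)) ∧
    (f i1 (Function.update a p 0) = f i1 (Function.update a p 2) ∧
      f i1 (Function.update a p 0) ≠ f i1 (Function.update a p 1)) ∧
    (f i2 (Function.update a p 0) = f i2 (Function.update a p 1) ∧
      f i2 (Function.update a p 0) ≠ f i2 (Function.update a p 2)) :=
  stmt11_general n a g hg f hf i1 i2 hi1 hi12 hi2 p hp
end

section
/- Define f : [n] × A^[m] → Z/sZ by f(i, a) = Σ_{F ⊆ [n], |F| = h, i ∈ F} a^{(g(F))}_{z(F,i)} mod s, where z(F,i) = |{j ∈ F : j ≤ i}|. Fix an h-subset F = {i_1 < ... < i_h} and let p = g(F). Then for every a and every b = (b_1,...,b_h) ∈ A: (1) f(i, a(p, b)) = f(i, a) for all i ∉ F; (2) f(i_u, a(p, b)) = f(i_u, a(p, 0)) + b_u mod s for all u ∈ [h], where a(p,b) denotes a with its p-th block replaced by b. -/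
/-! Since `g` is injective on `h`-subsets, `F0` is the only summand of `f i` that reads
block `p`. Replacing that block therefore leaves `f i` unchanged when `i ∉ F0`, and when
`i ∈ F0` it changes only the summand of `F0`, which reads coordinate `z(F0, i)` of the block. -/

namespace Finset

variable {α ι β M : Type*} [DecidableEq ι] [AddCommMonoid M]
  (S : Finset α) (g : α → ι) (φ : α → β → M) (w : ι → β) (p : ι) (c : β)

theorem sum_update_comp_of_forall_ne (hS : ∀ T ∈ S, g T ≠ p) :
    ∑ T ∈ S, φ T (Function.update w p c (g T)) = ∑ T ∈ S, φ T (w (g T)) :=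
  sum_congr rfl fun T hT => by rw [Function.update_of_ne (hS T hT)]

theorem sum_update_comp_eq_sum_erase_add [DecidableEq α] {T₀ : α} (hT₀ : T₀ ∈ S)
    (hgT₀ : g T₀ = p) (hfiber : ∀ T ∈ S, g T = p → T = T₀) :
    ∑ T ∈ S, φ T (Function.update w p c (g T)) =
      ∑ T ∈ S.erase T₀, φ T (w (g T)) + φ T₀ c := by
  rw [← sum_erase_add _ _ hT₀, hgT₀, Function.update_self, sum_update_comp_of_forall_ne]
  exact fun T hT hgT => ne_of_mem_erase hT (hfiber T (mem_of_mem_erase hT) hgT)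

end Finset

theorem stmt12_general (n h s : ℕ) (m : ℕ)
    (g : Finset ℕ → ℕ)
    (hg : Set.BijOn g {T : Finset ℕ | T ⊆ Finset.Icc 1 n ∧ T.card = h} (Set.Icc 1 m))
    (a : ℕ → ℕ → Fin s)
    (b : ℕ → Fin s)
    (f : ℕ → (ℕ → ℕ → Fin s) → ZMod s)
    (hf : ∀ i c, f i c =
      ∑ T ∈ ((Finset.Icc 1 n).powersetCard h).filter (fun T => i ∈ T),
        ((c (g T) ((T.filter (fun j => j ≤ i)).card) : ℕ) : ZMod s))
    (F0 : Finset ℕ) (hF0 : F0 ⊆ Finset.Icc 1 n) (hF0card : F0.card = h)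
    (p : ℕ) (hp : p = g F0)
    (zero : ℕ → Fin s) (hzero : ∀ j, (zero j : ℕ) = 0) :
    (∀ i ∈ Finset.Icc 1 n, i ∉ F0 →
        f i (Function.update a p b) = f i a) ∧
    (∀ i ∈ F0,
        f i (Function.update a p b) =
          f i (Function.update a p zero)
            + ((b ((F0.filter (fun j => j ≤ i)).card) : ℕ) : ZMod s)) := by
  have hfiber : ∀ i, ∀ T ∈ ((Finset.Icc 1 n).powersetCard h).filter (fun T => i ∈ T),
      g T = p → T = F0 := by
    intro i T hT hgT
    rw [Finset.mem_filter, Finset.mem_powersetCard] at hT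
    exact hg.injOn hT.1 ⟨hF0, hF0card⟩ (hgT.trans hp)
  refine ⟨fun i _ hiF => ?_, fun i hiF => ?_⟩
  · rw [hf, hf]
    exact Finset.sum_update_comp_of_forall_ne _ _
      (fun T (x : ℕ → Fin s) => ((x ((T.filter (fun j => j ≤ i)).card) : ℕ) : ZMod s)) _ _ _
      fun T hT hgT => hiF (hfiber i T hT hgT ▸ (Finset.mem_filter.1 hT).2)
  · have hF0mem : F0 ∈ ((Finset.Icc 1 n).powersetCard h).filter (fun T => i ∈ T) :=
      Finset.mem_filter.2 ⟨Finset.mem_powersetCard.2 ⟨hF0, hF0card⟩, hiF⟩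
    have hsplit := fun c => (hf i (Function.update a p c)).trans
      (Finset.sum_update_comp_eq_sum_erase_add _ _
        (fun T (x : ℕ → Fin s) => ((x ((T.filter (fun j => j ≤ i)).card) : ℕ) : ZMod s))
        a p c hF0mem hp.symm (hfiber i))
    rw [hsplit b, hsplit zero, hzero, Nat.cast_zero, add_zero]

theorem stmt12 (n h s : ℕ) (hh : 1 ≤ h) (hhn : h ≤ n) (hs : 2 ≤ s)
    (m : ℕ) (hm : m = Nat.choose n h)
    (g : Finset ℕ → ℕ)
    (hg : Set.BijOn g {T : Finset ℕ | T ⊆ Finset.Icc 1 n ∧ T.card = h} (Set.Icc 1 m))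
    (a : ℕ → ℕ → Fin s)
    (ha : ∀ p ∈ Finset.Icc 1 m,
      ((Finset.Icc 1 h).filter (fun j => (a p j : ℕ) = s - 1)).card ≤ 1)
    (b : ℕ → Fin s)
    (hb : ((Finset.Icc 1 h).filter (fun j => (b j : ℕ) = s - 1)).card ≤ 1)
    (f : ℕ → (ℕ → ℕ → Fin s) → ZMod s)
    (hf : ∀ i c, f i c =
      ∑ T ∈ ((Finset.Icc 1 n).powersetCard h).filter (fun T => i ∈ T),
        ((c (g T) ((T.filter (fun j => j ≤ i)).card) : ℕ) : ZMod s))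
    (F0 : Finset ℕ) (hF0 : F0 ⊆ Finset.Icc 1 n) (hF0card : F0.card = h)
    (p : ℕ) (hp : p = g F0)
    (zero : ℕ → Fin s) (hzero : ∀ j, (zero j : ℕ) = 0) :
    (∀ i ∈ Finset.Icc 1 n, i ∉ F0 →
        f i (Function.update a p b) = f i a) ∧
    (∀ i ∈ F0,
        f i (Function.update a p b) =
          f i (Function.update a p zero)
            + ((b ((F0.filter (fun j => j ≤ i)).card) : ℕ) : ZMod s)) :=
  stmt12_general n h s m g hg a b f hf F0 hF0 hF0card p hp zero hzero
end
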